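/- arXiv:1107.5588 — 4 statements merged into one kernel-verified Lean document; each statement's English description precedes it below -/
import Mathlib

section
/- Let Γ be a finite bipartite graph and Ω ⊆ ℝ^E its matching polytope. A point ω ∈ Ω is an extreme point (vertex) of Ω if and only if ω(e) ∈ {0,1} for every edge e, i.e. if and only if ω is the indicator function of a perfect matching of Γ. (In particular, the vertices of the matching polytope of a finite bipartite graph are exactly the perfect matchings.) -/
/-- A subset `M` of the edges of a finite bipartite graph (with edge-endpoint maps
`blk : E → B` and `wht : E → W`) is a perfect matching (dimer cover) if every
vertex is the endpoint of exactly one edge of `M`. -/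
def IsPerfectMatching {B W E : Type*} (blk : E → B) (wht : E → W) (M : Set E) : Prop :=
  (∀ b : B, ∃! e : E, e ∈ M ∧ blk e = b) ∧ (∀ w : W, ∃! e : E, e ∈ M ∧ wht e = w)

/-- The matching polytope of a finite bipartite graph: functions `ω : E → ℝ` with
`0 ≤ ω e ≤ 1` and whose sum over the edges at each vertex equals `1`. -/
def MatchingPolytope {B W E : Type*} [Fintype E] [DecidableEq B] [DecidableEq W]
    (blk : E → B) (wht : E → W) : Set (E → ℝ) :=
  {ω | (∀ e : E, 0 ≤ ω e ∧ ω e ≤ 1) ∧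
    (∀ b : B, ∑ e ∈ Finset.univ.filter (fun e => blk e = b), ω e = 1) ∧
    (∀ w : W, ∑ e ∈ Finset.univ.filter (fun e => wht e = w), ω e = 1)}

/-!
A `{0,1}`-valued point of `Ω` is a vertex of the cube `[0,1]^E ⊇ Ω`, hence of `Ω`.
Conversely, by Hall's theorem the support of any `ω ∈ Ω` contains a perfect matching `M`: a set
`A` of black vertices carries mass `#A`, all of which sits on the edges into its support
neighbourhood `N`, whose total mass is `#N`. If `0 < t < 1` lies below every positive value of
`ω`, then `ω = t • 1_M + (1 - t) • y` with `y ∈ Ω`, so an extreme `ω` equals `1_M`.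
-/

open Finset

lemma exists_pos_lt_one_forall_le_of_pos {ι : Type*} [Finite ι] (ω : ι → ℝ) :
    ∃ t, 0 < t ∧ t < 1 ∧ ∀ i, 0 < ω i → t ≤ ω i := by
  have hsmall : ∀ᶠ t in nhdsWithin (0 : ℝ) (Set.Ioi 0), t < 1 ∧ ∀ i, 0 < ω i → t ≤ ω i := by
    refine (eventually_lt_nhds one_pos).filter_mono nhdsWithin_le_nhds |>.and
      (Filter.eventually_all.2 fun i => ?_)
    by_cases hi : 0 < ω i
    · exact ((eventually_lt_nhds hi).filter_mono nhdsWithin_le_nhds).mono fun t ht _ => ht.le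
    · exact Filter.Eventually.of_forall fun _ h => absurd h hi
  obtain ⟨t, ht₀, ht⟩ :=
    ((eventually_mem_nhdsWithin (a := (0 : ℝ)) (s := Set.Ioi 0)).and hsmall).exists
  exact ⟨t, ht₀, ht⟩

section FiberSums

variable {E X : Type*} [Fintype E] [DecidableEq X] {f : E → X} {ω : E → ℝ}

lemma sum_filter_mem_eq_card_of_fiber_sums_eq_one
    (h : ∀ x, ∑ e ∈ univ.filter (fun e => f e = x), ω e = 1) (S : Finset X) :
    ∑ e ∈ univ.filter (fun e => f e ∈ S), ω e = #S := by
  rw [← sum_fiberwise_eq_sum_filter]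
  simp [h]

lemma le_one_of_fiber_sums_eq_one (hω : 0 ≤ ω)
    (h : ∀ x, ∑ e ∈ univ.filter (fun e => f e = x), ω e = 1) (e : E) : ω e ≤ 1 :=
  h (f e) ▸ single_le_sum (fun e' _ => hω e') (by simp)

lemma fiber_sum_indicator_eq_one_iff (M : Set E) (x : X) :
    ∑ e ∈ univ.filter (fun e => f e = x), M.indicator (fun _ => (1 : ℝ)) e = 1 ↔
      ∃! e, e ∈ M ∧ f e = x := by
  classical
  rw [Fintype.existsUnique_iff_card_one, ← Nat.cast_inj (R := ℝ)]
  simp [Set.indicator_apply, filter_filter, and_comm]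

end FiberSums

section MatchingPolytope

variable {B W E : Type*} [Fintype E] [DecidableEq B] [DecidableEq W] {blk : E → B} {wht : E → W}

lemma mem_matchingPolytope_iff {ω : E → ℝ} :
    ω ∈ MatchingPolytope blk wht ↔ 0 ≤ ω ∧
      (∀ b, ∑ e ∈ univ.filter (fun e => blk e = b), ω e = 1) ∧
      (∀ w, ∑ e ∈ univ.filter (fun e => wht e = w), ω e = 1) := by
  refine ⟨fun ⟨hI, hB, hW⟩ => ⟨fun e => (hI e).1, hB, hW⟩, fun ⟨h0, hB, hW⟩ => ?_⟩
  exact ⟨fun e => ⟨h0 e, le_one_of_fiber_sums_eq_one h0 hB e⟩, hB, hW⟩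

lemma matchingPolytope_subset_pi_Icc :
    MatchingPolytope blk wht ⊆ Set.univ.pi fun _ => Set.Icc (0 : ℝ) 1 :=
  fun _ hω e _ => hω.1 e

lemma indicator_mem_matchingPolytope_iff {M : Set E} :
    M.indicator (fun _ => (1 : ℝ)) ∈ MatchingPolytope blk wht ↔ IsPerfectMatching blk wht M := by
  classical
  simp only [mem_matchingPolytope_iff, IsPerfectMatching, fiber_sum_indicator_eq_one_iff]
  exact and_iff_right (Set.indicator_nonneg fun _ _ => zero_le_one)

lemma mem_extremePoints_matchingPolytope_of_forall_eq_zero_or_eq_one {ω : E → ℝ}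
    (hω : ω ∈ MatchingPolytope blk wht) (h01 : ∀ e, ω e = 0 ∨ ω e = 1) :
    ω ∈ (MatchingPolytope blk wht).extremePoints ℝ := by
  refine inter_extremePoints_subset_extremePoints_of_subset matchingPolytope_subset_pi_Icc ⟨hω, ?_⟩
  rw [extremePoints_pi]
  simpa using h01

lemma eq_of_mem_extremePoints_matchingPolytope_of_smul_le {ω χ : E → ℝ} {t : ℝ}
    (hω : ω ∈ (MatchingPolytope blk wht).extremePoints ℝ) (hχ : χ ∈ MatchingPolytope blk wht)
    (ht₀ : 0 < t) (ht₁ : t < 1) (hle : t • χ ≤ ω) : χ = ω := by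
  obtain ⟨-, hχB, hχW⟩ := mem_matchingPolytope_iff.1 hχ
  obtain ⟨-, hωB, hωW⟩ := mem_matchingPolytope_iff.1 hω.1
  have ht : 1 - t ≠ 0 := by linarith
  set y := (1 - t)⁻¹ • (ω - t • χ) with hy_def
  have hy : y ∈ MatchingPolytope blk wht := by
    refine mem_matchingPolytope_iff.2
      ⟨smul_nonneg (inv_nonneg.2 (by linarith)) (sub_nonneg.2 hle), fun b => ?_, fun w => ?_⟩ <;>
    · simp only [hy_def, Pi.smul_apply, Pi.sub_apply, smul_eq_mul, ← mul_sum, sum_sub_distrib,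
        hχB, hχW, hωB, hωW]
      field_simp
  have hseg : ω ∈ openSegment ℝ χ y := by
    refine ⟨t, 1 - t, ht₀, by linarith, by ring, ?_⟩
    rw [hy_def, smul_smul, mul_inv_cancel₀ ht, one_smul, add_sub_cancel]
  exact hω.2 hχ hy hseg

lemma card_le_card_filter_exists_adj_ne_zero [Fintype W] {ω : E → ℝ}
    (hω : ω ∈ MatchingPolytope blk wht) (A : Finset B) :
    #A ≤ #{w | ∃ b ∈ A, ∃ e, ω e ≠ 0 ∧ blk e = b ∧ wht e = w} := by
  obtain ⟨h0, hB, hW⟩ := mem_matchingPolytope_iff.1 hω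
  set N : Finset W := {w | ∃ b ∈ A, ∃ e, ω e ≠ 0 ∧ blk e = b ∧ wht e = w}
  have hsum : (#A : ℝ) ≤ #N := calc
    (#A : ℝ) = ∑ e ∈ univ.filter (fun e => blk e ∈ A), ω e :=
      (sum_filter_mem_eq_card_of_fiber_sums_eq_one hB A).symm
    _ = ∑ e ∈ univ.filter (fun e => blk e ∈ A ∧ ω e ≠ 0), ω e := by
      rw [← filter_filter, sum_filter_ne_zero]
    _ ≤ ∑ e ∈ univ.filter (fun e => wht e ∈ N), ω e := by
      refine sum_le_sum_of_subset_of_nonneg (fun e he => ?_) fun e _ _ => h0 e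
      simp only [mem_filter, mem_univ, true_and, N] at he ⊢
      exact ⟨blk e, he.1, e, he.2, rfl, rfl⟩
    _ = #N := sum_filter_mem_eq_card_of_fiber_sums_eq_one hW N
  exact_mod_cast hsum

lemma card_eq_card_of_mem_matchingPolytope [Fintype B] [Fintype W] {ω : E → ℝ}
    (hω : ω ∈ MatchingPolytope blk wht) : Fintype.card B = Fintype.card W := by
  obtain ⟨-, hB, hW⟩ := mem_matchingPolytope_iff.1 hω
  have hBsum := sum_filter_mem_eq_card_of_fiber_sums_eq_one hB univ
  have hWsum := sum_filter_mem_eq_card_of_fiber_sums_eq_one hW univ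
  simp only [mem_univ, filter_true, card_univ] at hBsum hWsum
  exact_mod_cast hBsum.symm.trans hWsum

lemma exists_isPerfectMatching_forall_ne_zero [Fintype B] [Fintype W] {ω : E → ℝ}
    (hω : ω ∈ MatchingPolytope blk wht) :
    ∃ M, IsPerfectMatching blk wht M ∧ ∀ e ∈ M, ω e ≠ 0 := by
  obtain ⟨f, hf_inj, hf⟩ := (Fintype.all_card_le_filter_rel_iff_exists_injective _).1
    (card_le_card_filter_exists_adj_ne_zero hω)
  choose m hm_ne hm_blk hm_wht using hf
  have hf_bij : Function.Bijective f :=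
    (Fintype.bijective_iff_injective_and_card f).2 ⟨hf_inj, card_eq_card_of_mem_matchingPolytope hω⟩
  refine ⟨Set.range m, ⟨fun b => ⟨m b, ⟨⟨b, rfl⟩, hm_blk b⟩, ?_⟩, fun w => ?_⟩, ?_⟩
  · rintro _ ⟨⟨b', rfl⟩, rfl⟩
    rw [hm_blk]
  · obtain ⟨b, rfl⟩ := hf_bij.2 w
    refine ⟨m b, ⟨⟨b, rfl⟩, hm_wht b⟩, ?_⟩
    rintro _ ⟨⟨b', rfl⟩, hb'⟩
    rw [hf_inj ((hm_wht b').symm.trans hb')]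
  · rintro _ ⟨b, rfl⟩
    exact hm_ne b

lemma exists_isPerfectMatching_indicator_eq_of_mem_extremePoints [Fintype B] [Fintype W]
    {ω : E → ℝ} (hω : ω ∈ (MatchingPolytope blk wht).extremePoints ℝ) :
    ∃ M, IsPerfectMatching blk wht M ∧ ω = M.indicator (fun _ => (1 : ℝ)) := by
  obtain ⟨h0, -⟩ := mem_matchingPolytope_iff.1 hω.1
  obtain ⟨M, hM, hM_ne⟩ := exists_isPerfectMatching_forall_ne_zero hω.1
  obtain ⟨t, ht₀, ht₁, ht⟩ := exists_pos_lt_one_forall_le_of_pos ω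
  refine ⟨M, hM, (eq_of_mem_extremePoints_matchingPolytope_of_smul_le hω
    (indicator_mem_matchingPolytope_iff.2 hM) ht₀ ht₁ fun e => ?_).symm⟩
  by_cases he : e ∈ M
  · simpa [he] using ht e ((h0 e).lt_of_ne' (hM_ne e he))
  · simpa [he] using h0 e

end MatchingPolytope

/-- The vertices (extreme points) of the matching polytope of a finite bipartite graph
are exactly the `{0,1}`-valued points, i.e. exactly the indicator functions of
perfect matchings. -/
theorem extremePoints_matchingPolytope_iff
    {B W E : Type*} [Fintype B] [Fintype W] [Fintype E] [DecidableEq B] [DecidableEq W]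
    (blk : E → B) (wht : E → W)
    (ω : E → ℝ) (hω : ω ∈ MatchingPolytope blk wht) :
    (ω ∈ Set.extremePoints ℝ (MatchingPolytope blk wht) ↔ ∀ e : E, ω e = 0 ∨ ω e = 1) ∧
    (ω ∈ Set.extremePoints ℝ (MatchingPolytope blk wht) ↔
      ∃ M : Set E, IsPerfectMatching blk wht M ∧ ω = M.indicator (fun _ => (1 : ℝ))) := by
  have extreme_of_zeroOne :=
    mem_extremePoints_matchingPolytope_of_forall_eq_zero_or_eq_one (blk := blk) (wht := wht) hω
  have zeroOne_of_matching : (∃ M : Set E, IsPerfectMatching blk wht M ∧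
      ω = M.indicator (fun _ => (1 : ℝ))) → ∀ e, ω e = 0 ∨ ω e = 1 := by
    rintro ⟨M, -, rfl⟩ e
    by_cases he : e ∈ M <;> simp [he]
  have matching_of_extreme :=
    exists_isPerfectMatching_indicator_eq_of_mem_extremePoints (blk := blk) (wht := wht) (ω := ω)
  exact ⟨⟨zeroOne_of_matching ∘ matching_of_extreme, extreme_of_zeroOne⟩,
    ⟨matching_of_extreme, extreme_of_zeroOne ∘ zeroOne_of_matching⟩⟩
end

section
/- If the matching polytope Ω of a finite bipartite graph Γ is nonempty — that is, if Γ admits a fractional perfect matching ω : E → [0,1] whose sum over the edges at each vertex equals 1 — then Γ admits a perfect matching. -/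
open Finset

section FractionalMatching

variable {B W E : Type*} [Fintype E]

theorem sum_filter_mem_eq_card_of_fiber_sum_eq_one {V : Type*} [DecidableEq V]
    (p : E → V) (ω : E → ℝ) (hfiber : ∀ v, ∑ e ∈ univ.filter (fun e => p e = v), ω e = 1)
    (S : Finset V) :
    ∑ e ∈ univ.filter (fun e => p e ∈ S), ω e = #S := by
  rw [← sum_fiberwise_eq_sum_filter univ S p ω]
  simp [hfiber]

theorem card_eq_sum_of_fiber_sum_eq_one {V : Type*} [Fintype V] [DecidableEq V]
    (p : E → V) (ω : E → ℝ) (hfiber : ∀ v, ∑ e ∈ univ.filter (fun e => p e = v), ω e = 1) :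
    (Fintype.card V : ℝ) = ∑ e, ω e := by
  rw [← sum_fiberwise univ p ω]
  simp [hfiber]

variable [DecidableEq B] [DecidableEq W] (blk : E → B) (wht : E → W) (ω : E → ℝ)

noncomputable def supportNeighbors (b : B) : Finset W :=
  (univ.filter fun e => blk e = b ∧ 0 < ω e).image wht

variable {blk wht ω}

theorem mem_supportNeighbors {b : B} {w : W} :
    w ∈ supportNeighbors blk wht ω b ↔ ∃ e, (blk e = b ∧ 0 < ω e) ∧ wht e = w := by
  simp [supportNeighbors]

theorem card_le_card_biUnion_supportNeighbors (hω : ∀ e, 0 ≤ ω e)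
    (hblack : ∀ b, ∑ e ∈ univ.filter (fun e => blk e = b), ω e = 1)
    (hwhite : ∀ w, ∑ e ∈ univ.filter (fun e => wht e = w), ω e = 1) (S : Finset B) :
    #S ≤ #(S.biUnion (supportNeighbors blk wht ω)) := by
  set N := S.biUnion (supportNeighbors blk wht ω)
  have hreach : ∀ e ∈ univ.filter (fun e => blk e ∈ S), ω e ≠ 0 → wht e ∈ N := by
    intro e he hne
    refine mem_biUnion.2 ⟨blk e, (mem_filter.1 he).2, mem_supportNeighbors.2 ⟨e, ⟨rfl, ?_⟩, rfl⟩⟩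
    exact lt_of_le_of_ne (hω e) hne.symm
  have hweight : (#S : ℝ) ≤ #N :=
    calc (#S : ℝ)
        = ∑ e ∈ univ.filter (fun e => blk e ∈ S), ω e :=
          (sum_filter_mem_eq_card_of_fiber_sum_eq_one blk ω hblack S).symm
      _ = ∑ e ∈ (univ.filter fun e => blk e ∈ S).filter (fun e => wht e ∈ N), ω e :=
          (sum_filter_of_ne hreach).symm
      _ ≤ ∑ e ∈ univ.filter (fun e => wht e ∈ N), ω e :=
          sum_le_sum_of_subset_of_nonneg (monotone_filter_left _ (subset_univ _))
            fun e _ _ => hω e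
      _ = #N := sum_filter_mem_eq_card_of_fiber_sum_eq_one wht ω hwhite N
  exact_mod_cast hweight

end FractionalMatching

theorem isPerfectMatching_range {B W E : Type*} {blk : E → B} {wht : E → W} {g : B → E}
    (hblk : ∀ b, blk (g b) = b) (hwht : (wht ∘ g).Bijective) :
    IsPerfectMatching blk wht (Set.range g) := by
  constructor
  · intro b
    refine ⟨g b, ⟨⟨b, rfl⟩, hblk b⟩, ?_⟩
    rintro _ ⟨⟨b', rfl⟩, rfl⟩
    rw [hblk]
  · intro w
    obtain ⟨b, rfl⟩ := hwht.2 w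
    refine ⟨g b, ⟨⟨b, rfl⟩, rfl⟩, ?_⟩
    rintro _ ⟨⟨b', rfl⟩, hb'⟩
    rw [hwht.1 hb']

/-- If a finite bipartite graph admits a fractional perfect matching — a function
`ω : E → [0,1]` whose sum over the edges at each vertex equals `1` — then it admits
a perfect matching. -/
theorem exists_perfectMatching_of_fractional
    {B W E : Type*} [Fintype B] [Fintype W] [Fintype E] [DecidableEq B] [DecidableEq W]
    (blk : E → B) (wht : E → W)
    (ω : E → ℝ)
    (hbound : ∀ e : E, 0 ≤ ω e ∧ ω e ≤ 1)
    (hblack : ∀ b : B, ∑ e ∈ Finset.univ.filter (fun e => blk e = b), ω e = 1)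
    (hwhite : ∀ w : W, ∑ e ∈ Finset.univ.filter (fun e => wht e = w), ω e = 1) :
    ∃ M : Set E, IsPerfectMatching blk wht M := by
  obtain ⟨f, hf_inj, hf_mem⟩ :=
    (all_card_le_biUnion_card_iff_exists_injective (supportNeighbors blk wht ω)).1
      (card_le_card_biUnion_supportNeighbors (fun e => (hbound e).1) hblack hwhite)
  have hcard : Fintype.card B = Fintype.card W := by
    exact_mod_cast (card_eq_sum_of_fiber_sum_eq_one blk ω hblack).trans
      (card_eq_sum_of_fiber_sum_eq_one wht ω hwhite).symm
  have hf_bij : f.Bijective := (Fintype.bijective_iff_injective_and_card f).2 ⟨hf_inj, hcard⟩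
  choose g hg using fun b => mem_supportNeighbors.1 (hf_mem b)
  have hwht : wht ∘ g = f := funext fun b => (hg b).2
  exact ⟨Set.range g, isPerfectMatching_range (fun b => (hg b).1.1) (hwht ▸ hf_bij)⟩
end

section
/- Let 𝔽 be a field and B_0, B_1, B_2, B_3, B_4, B_5, B_6 nonzero elements of 𝔽. Define c_1 = B_2B_3/(B_0B_4), c_2 = B_3B_1/(B_0B_5), c_3 = B_1B_2/(B_0B_6) and Q = c_1c_2 + c_2c_3 + c_3c_1. Then (Q/c_1)·(B_5B_6/B_1) = (Q/c_2)·(B_4B_6/B_2) = (Q/c_3)·(B_4B_5/B_3) = (B_1B_4 + B_2B_5 + B_3B_6)/B_0. Consequently, if the Y–Δ move transforms the conductances c_1, c_2, c_3 of a Y into the conductances C_i = Q/c_i of a Δ, and the new variable B_7 is defined by any one of C_1 = B_1B_7/(B_5B_6), C_2 = B_2B_7/(B_4B_6), C_3 = B_3B_7/(B_4B_5), then all three definitions agree and yield the cube recurrence B_7·B_0 = B_1B_4 + B_2B_5 + B_3B_6. -/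
/-!
Writing `Q = c₁c₂ + c₂c₃ + c₃c₁ = c₁c₂c₃ (c₁⁻¹ + c₂⁻¹ + c₃⁻¹)`, each Δ conductance is
`Q / cᵢ = cⱼcₖ (c₁⁻¹ + c₂⁻¹ + c₃⁻¹)`. The resistances `cᵢ⁻¹ = B₀B₄/(B₂B₃), …` sum to
`B₀(B₁B₄ + B₂B₅ + B₃B₆)/(B₁B₂B₃)`, which is where the cube recurrence comes from; the remaining
factor `cⱼcₖ` times the ratio of `B`'s defining `B₇` is `B₁B₂B₃/B₀²`. The three identities are
permutations of one another.
-/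

theorem pairwise_products_div_eq {K : Type*} [Field K] {a b c : K}
    (ha : a ≠ 0) (hb : b ≠ 0) (hc : c ≠ 0) :
    (a * b + b * c + c * a) / a = b * c * (a⁻¹ + b⁻¹ + c⁻¹) := by
  field_simp
  ring

theorem sum_inv_conductances {K : Type*} [Field K] (B0 B1 B2 B3 B4 B5 B6 : K)
    (h1 : B1 ≠ 0) (h2 : B2 ≠ 0) (h3 : B3 ≠ 0) :
    (B2 * B3 / (B0 * B4))⁻¹ + (B3 * B1 / (B0 * B5))⁻¹ + (B1 * B2 / (B0 * B6))⁻¹ =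
      B0 * (B1 * B4 + B2 * B5 + B3 * B6) / (B1 * B2 * B3) := by
  simp only [inv_div]
  field_simp

theorem yDelta_conductance_mul_eq {K : Type*} [Field K] (B0 B1 B2 B3 B4 B5 B6 : K)
    (h0 : B0 ≠ 0) (h1 : B1 ≠ 0) (h2 : B2 ≠ 0) (h3 : B3 ≠ 0)
    (h4 : B4 ≠ 0) (h5 : B5 ≠ 0) (h6 : B6 ≠ 0) :
    ((B2 * B3 / (B0 * B4)) * (B3 * B1 / (B0 * B5)) +
      (B3 * B1 / (B0 * B5)) * (B1 * B2 / (B0 * B6)) +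
      (B1 * B2 / (B0 * B6)) * (B2 * B3 / (B0 * B4))) / (B2 * B3 / (B0 * B4)) *
        (B5 * B6 / B1) = (B1 * B4 + B2 * B5 + B3 * B6) / B0 := by
  rw [pairwise_products_div_eq (by positivity) (by positivity) (by positivity),
    sum_inv_conductances B0 B1 B2 B3 B4 B5 B6 h1 h2 h3]
  field_simp

/-- The cube recurrence from the Y–Δ move: with conductances
`c₁ = B₂B₃/(B₀B₄)`, `c₂ = B₃B₁/(B₀B₅)`, `c₃ = B₁B₂/(B₀B₆)` and
`Q = c₁c₂ + c₂c₃ + c₃c₁`, the three possible definitions of the new variable `B₇`,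
namely `(Q/cᵢ)` times the appropriate ratio of `B`'s, all agree and equal
`(B₁B₄ + B₂B₅ + B₃B₆)/B₀`. -/
theorem YDelta_cube_recurrence {𝔽 : Type*} [Field 𝔽]
    (B0 B1 B2 B3 B4 B5 B6 : 𝔽)
    (h0 : B0 ≠ 0) (h1 : B1 ≠ 0) (h2 : B2 ≠ 0) (h3 : B3 ≠ 0)
    (h4 : B4 ≠ 0) (h5 : B5 ≠ 0) (h6 : B6 ≠ 0) :
    ((B2 * B3 / (B0 * B4)) * (B3 * B1 / (B0 * B5)) +
      (B3 * B1 / (B0 * B5)) * (B1 * B2 / (B0 * B6)) +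
      (B1 * B2 / (B0 * B6)) * (B2 * B3 / (B0 * B4))) / (B2 * B3 / (B0 * B4)) *
        (B5 * B6 / B1) = (B1 * B4 + B2 * B5 + B3 * B6) / B0 ∧
    ((B2 * B3 / (B0 * B4)) * (B3 * B1 / (B0 * B5)) +
      (B3 * B1 / (B0 * B5)) * (B1 * B2 / (B0 * B6)) +
      (B1 * B2 / (B0 * B6)) * (B2 * B3 / (B0 * B4))) / (B3 * B1 / (B0 * B5)) *
        (B4 * B6 / B2) = (B1 * B4 + B2 * B5 + B3 * B6) / B0 ∧
    ((B2 * B3 / (B0 * B4)) * (B3 * B1 / (B0 * B5)) +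
      (B3 * B1 / (B0 * B5)) * (B1 * B2 / (B0 * B6)) +
      (B1 * B2 / (B0 * B6)) * (B2 * B3 / (B0 * B4))) / (B1 * B2 / (B0 * B6)) *
        (B4 * B5 / B3) = (B1 * B4 + B2 * B5 + B3 * B6) / B0 :=
  ⟨yDelta_conductance_mul_eq B0 B1 B2 B3 B4 B5 B6 h0 h1 h2 h3 h4 h5 h6,
    by linear_combination yDelta_conductance_mul_eq B0 B2 B3 B1 B5 B6 B4 h0 h2 h3 h1 h5 h6 h4,
    by linear_combination yDelta_conductance_mul_eq B0 B3 B1 B2 B6 B4 B5 h0 h3 h1 h2 h6 h4 h5⟩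
end

section
/- Let 𝔽 be a field and C_1, C_2, C_3 ∈ 𝔽 nonzero with C_1 + C_2 + C_3 ≠ 0. Set X_1 = C_2/C_3, X_2 = C_3/C_1, X_3 = C_1/C_2. Then the denominators below are nonzero and (1 + X_1 + X_1X_3)/(X_3(1 + X_2 + X_1X_2)) = X_1, (1 + X_2 + X_1X_2)/(X_1(1 + X_3 + X_2X_3)) = X_2, (1 + X_3 + X_2X_3)/(X_2(1 + X_1 + X_1X_3)) = X_3. That is, on the locus where the three face variables are the ratios X_1 = C_2/C_3, X_2 = C_3/C_1, X_3 = C_1/C_2 of conductances, the composite of the four cluster mutations realizing the Y–Δ move returns the face variables X_1, X_2, X_3 to themselves. -/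
/-!
On the resistor-network locus every factor `1 + Xᵢ + XᵢXⱼ` of the Y–Δ formulas collapses to
`(C₁ + C₂ + C₃) / Cₖ`, so each formula becomes `(s / Cₖ) / (s / Cₗ)` with `s = C₁ + C₂ + C₃`,
and the common factor `s` cancels, leaving exactly the ratio `Cₗ / Cₖ` that defines the variable.
-/

theorem one_add_div_add_div_mul_div {𝔽 : Type*} [Field 𝔽] {a b : 𝔽} (c : 𝔽)
    (ha : a ≠ 0) (hb : b ≠ 0) : 1 + b / a + c / b * (b / a) = (a + b + c) / a := by
  field_simp

/-- On the resistor-network locus `X₁ = C₂/C₃`, `X₂ = C₃/C₁`, `X₃ = C₁/C₂`,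
the composite of the four cluster mutations realizing the Y–Δ move returns the face
variables to themselves. -/
theorem YDelta_cluster_fixes_resistor_locus {𝔽 : Type*} [Field 𝔽]
    (C1 C2 C3 : 𝔽) (h1 : C1 ≠ 0) (h2 : C2 ≠ 0) (h3 : C3 ≠ 0)
    (hs : C1 + C2 + C3 ≠ 0) :
    (C1 / C2 * (1 + C3 / C1 + (C2 / C3) * (C3 / C1)) ≠ 0) ∧
    (C2 / C3 * (1 + C1 / C2 + (C3 / C1) * (C1 / C2)) ≠ 0) ∧
    (C3 / C1 * (1 + C2 / C3 + (C2 / C3) * (C1 / C2)) ≠ 0) ∧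
    (1 + C2 / C3 + (C2 / C3) * (C1 / C2)) /
        (C1 / C2 * (1 + C3 / C1 + (C2 / C3) * (C3 / C1))) = C2 / C3 ∧
    (1 + C3 / C1 + (C2 / C3) * (C3 / C1)) /
        (C2 / C3 * (1 + C1 / C2 + (C3 / C1) * (C1 / C2))) = C3 / C1 ∧
    (1 + C1 / C2 + (C3 / C1) * (C1 / C2)) /
        (C3 / C1 * (1 + C2 / C3 + (C2 / C3) * (C1 / C2))) = C1 / C2 := by
  set s := C1 + C2 + C3
  have e1 : 1 + C3 / C1 + C2 / C3 * (C3 / C1) = s / C1 := by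
    rw [one_add_div_add_div_mul_div C2 h1 h3]; ring
  have e2 : 1 + C1 / C2 + C3 / C1 * (C1 / C2) = s / C2 := by
    rw [one_add_div_add_div_mul_div C3 h2 h1]; ring
  have e3 : 1 + C2 / C3 + C2 / C3 * (C1 / C2) = s / C3 := by
    rw [mul_comm, one_add_div_add_div_mul_div C1 h3 h2]; ring
  rw [e1, e2, e3, div_mul_div_cancel₀' h1, div_mul_div_cancel₀' h2, div_mul_div_cancel₀' h3]
  exact ⟨div_ne_zero hs h2, div_ne_zero hs h3, div_ne_zero hs h1,
    div_div_div_cancel_left' _ _ hs, div_div_div_cancel_left' _ _ hs,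
    div_div_div_cancel_left' _ _ hs⟩
end
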